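/- arXiv:math/0512332 — 2 statements merged into one kernel-verified Lean document; each statement's English description precedes it below -/
import Mathlib

section
/- For all parameters in the admissible ranges, the chromatic numbers satisfy χ(H_{k,m,c}) = χ(H_{k,m,f}) = χ(H_{k,m,g}) = 3. -/
open SimpleGraph

namespace HexPaper

/-- Vertices live in `ℕ × ℕ`. -/
abbrev V2 : Type := ℕ × ℕ

/-- Edge set of the `p × q` grid: `(i,j) ~ (i',j')` iff `|i-i'| + |j-j'| = 1`. -/
def gridE (p q : ℕ) : Set (Sym2 V2) :=
  {e | ∃ a b : V2, a.1 < p ∧ a.2 < q ∧ b.1 < p ∧ b.2 < q ∧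
    ((a.1 = b.1 ∧ b.2 = a.2 + 1) ∨ (a.2 = b.2 ∧ b.1 = a.1 + 1)) ∧ e = s(a, b)}

/-- Vertex set of the `p × q` grid. -/
def gridV (p q : ℕ) : Set V2 := {v | v.1 < p ∧ v.2 < q}

/-- Edge set of the cylinder grid `p × q`: the grid plus the wrap-around edges. -/
def cylGridE (p q : ℕ) : Set (Sym2 V2) :=
  gridE p q ∪ {e | ∃ j, j < p ∧ e = s(((j, 0) : V2), (j, q - 1))}

/-- Edge set of the hexagonal cylinder of length `k` and breadth `m`. -/
def hexCylE (k m : ℕ) : Set (Sym2 V2) :=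
  cylGridE (m + 1) (2 * k) \
    {e | ∃ i j, i ≤ (m - 1) / 2 ∧ j < k ∧
      (e = s(((2 * i, 2 * j) : V2), (2 * i + 1, 2 * j)) ∨
       e = s(((2 * i + 1, 2 * j + 1) : V2), (2 * i + 2, 2 * j + 1)))}

/-- Vertex set of the hexagonal cylinder of length `k` and breadth `m`. -/
def cylV (k m : ℕ) : Set V2 := gridV (m + 1) (2 * k)

/-- The degree-two vertices `z_j` of the hexagonal cylinder. -/
def zC (j : ℕ) : V2 := (0, 2 * j)

/-- The degree-two vertices `x_j` of the hexagonal cylinder of breadth `m`. -/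
def xC (m j : ℕ) : V2 := if m % 2 = 1 then (m, 2 * j) else (m, 2 * j + 1)

/-- Edge set of `H_{k,m,r}`. -/
def HrE (k m r : ℕ) : Set (Sym2 V2) :=
  hexCylE k m ∪ {e | ∃ j, j < k ∧ e = s(zC j, xC m ((j + r) % k))}

/-- Edge set of `H_{k,m,a}`. -/
def HaE (k m : ℕ) : Set (Sym2 V2) :=
  hexCylE k m ∪ {s(zC 0, xC m 1), s(zC 1, xC m 0)} ∪
    {e | ∃ i, 2 ≤ i ∧ i < k ∧ e = s(zC i, xC m ((k + 1 - i) % k))}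

/-- Edge set of `H_{k,m,b}`. -/
def HbE (k m : ℕ) : Set (Sym2 V2) :=
  hexCylE k m ∪ {s(zC 0, xC m 0)} ∪
    {e | ∃ i, 1 ≤ i ∧ i < k ∧ e = s(zC i, xC m ((k - i) % k))}

/-- Edge set of `H_{k,m,c}` (in its Klein-bottle coordinates on the `(2m+2) × k` grid). -/
def HcE (k m : ℕ) : Set (Sym2 V2) :=
  (gridE (2 * m + 2) k \
    {e | ∃ i j, i ≤ m ∧ j < k / 2 ∧
      (e = s(((2 * i, 2 * j + 1) : V2), (2 * i + 1, 2 * j + 1)) ∨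
       e = s(((2 * i + 1, 2 * j) : V2), (2 * i + 2, 2 * j)))}) ∪
  {e | ∃ i, i < k / 2 ∧ e = s(((0, 2 * i + 1) : V2), (2 * m + 1, 2 * i + 1))} ∪
  {e | ∃ i, i ≤ 2 * m + 1 ∧ e = s(((i, 0) : V2), (2 * m + 1 - i, k - 1))}

/-- Vertex set of `H_{k,m,c}`. -/
def HcV (k m : ℕ) : Set V2 := gridV (2 * m + 2) k

/-- Edge set of `H_{k,m,f}` (in its Klein-bottle coordinates on the `(2m+4) × k` grid). -/
def HfE (k m : ℕ) : Set (Sym2 V2) :=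
  (gridE (2 * m + 4) k \
    {e | ∃ i j, i ≤ m + 1 ∧ j < (k - 1) / 2 ∧
      (e = s(((2 * i, 2 * j + 1) : V2), (2 * i + 1, 2 * j + 1)) ∨
       e = s(((2 * i + 1, 2 * j) : V2), (2 * i + 2, 2 * j)))}) ∪
  {e | ∃ i, i < (k - 1) / 2 ∧ e = s(((0, 2 * i + 1) : V2), (2 * m + 3, 2 * i + 1))} ∪
  {s(((0, 0) : V2), ((0, k - 1) : V2))} ∪
  {e | ∃ i, 1 ≤ i ∧ i ≤ 2 * m + 3 ∧ e = s(((i, 0) : V2), (2 * m + 4 - i, k - 1))}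

/-- Vertex set of `H_{k,m,f}`. -/
def HfV (k m : ℕ) : Set V2 := gridV (2 * m + 4) k

/-- Vertex set of the hexagonal ladder of length `k` and breadth `m`:
the `(m+1) × (2k+m)` grid minus `{(j,i) : j ≤ m-2, i ≤ m-2-j}` and
`{(j,2k+i) : 2 ≤ j ≤ m, m+1-j ≤ i ≤ m-1}`. -/
def ladV (k m : ℕ) : Set V2 :=
  {v | v.1 ≤ m ∧ v.2 < 2 * k + m ∧
    ¬(v.1 + 2 ≤ m ∧ v.1 + v.2 + 2 ≤ m) ∧
    ¬(2 ≤ v.1 ∧ 2 * k ≤ v.2 ∧ m + 1 ≤ v.1 + (v.2 - 2 * k) ∧ v.2 - 2 * k + 1 ≤ m)}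

/-- Edge set of the hexagonal ladder of length `k` and breadth `m`. -/
def ladE (k m : ℕ) : Set (Sym2 V2) :=
  gridE (m + 1) (2 * k + m) \
    {e | ∃ i j, i < m ∧ j < k ∧ e = s(((i, m - i + 2 * j) : V2), (i + 1, m - i + 2 * j))}

/-- Vertex set of the twisted hexagonal cylinder `TC_{k,m,1}` (for `k ≤ m-2`). -/
def tc1V (k m : ℕ) : Set V2 := ladV k m ∪ {(0, 2 * k + m), (m - k - 1, 3 * k + 2)}

/-- Edge set of the twisted hexagonal cylinder `TC_{k,m,1}`. -/
def tc1E (k m : ℕ) : Set (Sym2 V2) :=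
  ladE k m ∪
  {s(((0, 2 * k + m) : V2), (0, 2 * k + m - 1)),
   s(((0, 2 * k + m) : V2), (k + 1, m - k - 2)),
   s(((m - k - 1, 3 * k + 2) : V2), (m - k - 1, 3 * k + 1)),
   s(((m - k - 1, 3 * k + 2) : V2), (m, 0))} ∪
  {e | ∃ j, 1 ≤ j ∧ j + k + 2 ≤ m ∧
    e = s(((j, 2 * k + m - j) : V2), (k + j + 1, m - k - j - 2))}

/-- The degree-two vertices `z_j` of `TC_{k,m,1}`, `0 ≤ j ≤ k`. -/
def z1 (k m j : ℕ) : V2 := (0, 2 * k + m - 2 * j)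

/-- The degree-two vertices `x_j` of `TC_{k,m,1}`, `0 ≤ j ≤ k`. -/
def x1 (m j : ℕ) : V2 := (j, m - (j + 1))

/-- The degree-two vertices `v_i` of `TC_{k,m,1}`, `0 ≤ i ≤ k`. -/
def v1 (k m i : ℕ) : V2 :=
  if i = 0 then (m - k - 1, 3 * k + 2) else (m - k + 1, 3 * k - (i - 1))

/-- The degree-two vertices `w_i` of `TC_{k,m,1}`, `0 ≤ i ≤ k`. -/
def w1 (k m i : ℕ) : V2 :=
  if i = 0 then (m, 2 * k) else (m, 2 * k - (2 * (i - 1) + 1))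

/-- Edge set of `H_{k,m,h}`. -/
def HhE (k m : ℕ) : Set (Sym2 V2) :=
  tc1E k m ∪ {e | ∃ i, i ≤ k ∧ e = s(z1 k m i, x1 m i)} ∪
    {e | ∃ i, i < k ∧ e = s(v1 k m i, w1 k m i)}

/-- Vertex set of the twisted hexagonal cylinder `TC_{k,m,2}` (for `k ≥ m+1`):
the hexagonal ladder of length `k` and breadth `m+1` minus the vertices
`(m+1,i)`, `0 ≤ i ≤ 2(k-m)-3` (no vertex deleted when `k = m+1`). -/
def tc2V (k m : ℕ) : Set V2 :=
  ladV k (m + 1) \ {v | v.1 = m + 1 ∧ m + 2 ≤ k ∧ v.2 + 3 ≤ 2 * (k - m)}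

/-- Edge set of the twisted hexagonal cylinder `TC_{k,m,2}`. -/
def tc2E (k m : ℕ) : Set (Sym2 V2) :=
  ladE k (m + 1) ∪ {s(((0, 2 * k + m) : V2), (m + 1, 2 * (k - m - 1)))} ∪
  {e | ∃ j, j + m + 2 ≤ k ∧
    e = s(((0, 2 * k + m - (2 * j + 1)) : V2), (m, 2 * (k - m - 1) - (2 * j + 2)))}

/-- The degree-two vertices `x_i` of `TC_{k,m,2}`, `0 ≤ i ≤ m`. -/
def x2 (m i : ℕ) : V2 := (m - i, i)

/-- The degree-two vertices `z_i` of `TC_{k,m,2}`, `0 ≤ i ≤ m`. -/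
def z2 (m i : ℕ) : V2 := (0, m + 2 * i + 1)

/-- The degree-two vertices `w_i` of `TC_{k,m,2}`, `0 ≤ i ≤ m`. -/
def w2 (k m i : ℕ) : V2 := (i + 1, 2 * k + m - i)

/-- The degree-two vertices `v_i` of `TC_{k,m,2}`, `0 ≤ i ≤ m`. -/
def v2 (k m i : ℕ) : V2 := (m + 1, 2 * k - (2 * i + 1))

/-- Edge set of `H_{k,m,g}`. -/
def HgE (k m : ℕ) : Set (Sym2 V2) :=
  tc2E k m ∪ {e | ∃ i, i ≤ m ∧ (e = s(z2 m i, w2 k m i) ∨ e = s(x2 m i, v2 k m i))}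

/-- The simple graph on the vertex set `Vs` whose edges are the members of `E`
joining two vertices of `Vs`. -/
def mkG (E : Set (Sym2 V2)) (Vs : Set V2) : SimpleGraph ↥Vs :=
  (SimpleGraph.fromEdgeSet E).induce Vs

/-- The hexagonal cylinder of length `k` and breadth `m`, as a graph. -/
def HexCylinder (k m : ℕ) : SimpleGraph ↥(cylV k m) := mkG (hexCylE k m) (cylV k m)

def Hr (k m r : ℕ) : SimpleGraph ↥(cylV k m) := mkG (HrE k m r) (cylV k m)
def Ha (k m : ℕ) : SimpleGraph ↥(cylV k m) := mkG (HaE k m) (cylV k m)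
def Hb (k m : ℕ) : SimpleGraph ↥(cylV k m) := mkG (HbE k m) (cylV k m)
def Hc (k m : ℕ) : SimpleGraph ↥(HcV k m) := mkG (HcE k m) (HcV k m)
def Hf (k m : ℕ) : SimpleGraph ↥(HfV k m) := mkG (HfE k m) (HfV k m)
def Ladder (k m : ℕ) : SimpleGraph ↥(ladV k m) := mkG (ladE k m) (ladV k m)
def TC1 (k m : ℕ) : SimpleGraph ↥(tc1V k m) := mkG (tc1E k m) (tc1V k m)
def TC2 (k m : ℕ) : SimpleGraph ↥(tc2V k m) := mkG (tc2E k m) (tc2V k m)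
def Hg (k m : ℕ) : SimpleGraph ↥(tc2V k m) := mkG (HgE k m) (tc2V k m)
def Hh (k m : ℕ) : SimpleGraph ↥(tc1V k m) := mkG (HhE k m) (tc1V k m)

/-- Edge set of the torus locally grid graph `T^δ_{p,q}`. -/
def TtE (p q δ : ℕ) : Set (Sym2 V2) :=
  gridE p q ∪ {e | ∃ i, i < p ∧ e = s(((i, 0) : V2), ((i + δ) % p, q - 1))} ∪
    {e | ∃ j, j < q ∧ e = s(((0, j) : V2), (p - 1, j))}

/-- Edge set of the Klein bottle locally grid graphs `K^0_{p,q}` (`p` even) and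
`K^1_{p,q}` (`p` odd). -/
def KflipE (p q : ℕ) : Set (Sym2 V2) :=
  gridE p q ∪ {e | ∃ j, j < p ∧ e = s(((j, 0) : V2), (p - j - 1, q - 1))} ∪
    {e | ∃ j, j < q ∧ e = s(((0, j) : V2), (p - 1, j))}

/-- Edge set of the Klein bottle locally grid graph `K^2_{p,q}` (`p` even). -/
def K2E (p q : ℕ) : Set (Sym2 V2) :=
  gridE p q ∪ {e | ∃ j, j < p ∧ e = s(((j, 0) : V2), ((p - j) % p, q - 1))} ∪
    {e | ∃ j, j < q ∧ e = s(((0, j) : V2), (p - 1, j))}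

/-- Edge set of the locally grid graph `S_{p,q}`. -/
def SE (p q : ℕ) : Set (Sym2 V2) :=
  if p ≤ q then
    gridE p q ∪ {e | ∃ j, j < p ∧ e = s(((j, 0) : V2), ((p - j) % p, q - p + j))} ∪
      {e | ∃ i, i < p ∧ e = s(((0, i) : V2), (i, q - 1))} ∪
      {e | ∃ i, p ≤ i ∧ i < q ∧ e = s(((0, i) : V2), (p - 1, i - p))}
  else
    gridE p q ∪ {e | ∃ j, j < q ∧ e = s(((j, 0) : V2), (0, q - 1 - j))} ∪
      {e | ∃ i, i < q ∧ e = s(((p - 1 - i, q - 1) : V2), (p - 1, i))} ∪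
      {e | ∃ i, i < p - q ∧ e = s(((i, q - 1) : V2), (i + q, 0))}

def Tt (p q δ : ℕ) : SimpleGraph ↥(gridV p q) := mkG (TtE p q δ) (gridV p q)
def Kflip (p q : ℕ) : SimpleGraph ↥(gridV p q) := mkG (KflipE p q) (gridV p q)
def K2 (p q : ℕ) : SimpleGraph ↥(gridV p q) := mkG (K2E p q) (gridV p q)
def Sg (p q : ℕ) : SimpleGraph ↥(gridV p q) := mkG (SE p q) (gridV p q)

/-- `s` is the vertex set of a cycle of length `n` in `G`. -/
def IsCycleSetN {V : Type} (G : SimpleGraph V) (n : ℕ) (s : Set V) : Prop :=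
  ∃ (u : V) (w : G.Walk u u), w.IsCycle ∧ w.length = n ∧ ∀ v, v ∈ w.support ↔ v ∈ s

/-- `C` is a collection of `6`-cycles of `G` such that every `2`-path of `G` is
contained in precisely one member of `C`. -/
def IsCellCollection {V : Type} (G : SimpleGraph V) (C : Set (Set V)) : Prop :=
  (∀ s ∈ C, IsCycleSetN G 6 s) ∧
    ∀ x y z : V, G.Adj x y → G.Adj y z → x ≠ z →
      ∃! s, s ∈ C ∧ x ∈ s ∧ y ∈ s ∧ z ∈ s

/-- `G` is a hexagonal tiling: connected, cubic, of girth 6, with a collection of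
6-cycles (cells) such that every 2-path lies in precisely one of them. -/
def IsHexagonalTiling {V : Type} (G : SimpleGraph V) : Prop :=
  G.Connected ∧ (∀ v, (G.neighborSet v).ncard = 3) ∧ G.girth = 6 ∧
    ∃ C : Set (Set V), IsCellCollection G C

/-- The dual of a (locally grid) graph `G`: vertices are the squares (4-cycles)
of `G`, two squares being adjacent iff they share an edge of `G`. -/
def dualG {V : Type} (G : SimpleGraph V) :
    SimpleGraph {s : Set V // IsCycleSetN G 4 s} :=
  SimpleGraph.fromRel fun s t =>
    ∃ x y : V, G.Adj x y ∧ x ∈ s.1 ∧ y ∈ s.1 ∧ x ∈ t.1 ∧ y ∈ t.1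

/-- The graph on the vertex set `Vs ⊆ ℕ × ℕ` (kept as a graph on `ℕ × ℕ`, all
other vertices being isolated) whose edges are the members of `E` joining two
vertices of `Vs`. -/
def ambientG (E : Set (Sym2 V2)) (Vs : Set V2) : SimpleGraph V2 :=
  SimpleGraph.fromEdgeSet {e | e ∈ E ∧ ∀ v ∈ e, v ∈ Vs}

/-- `P` is a perfect matching of the graph `G` with vertex set `Vs`: the members
of `P` are edges of `G` and every vertex of `Vs` lies in exactly one member of `P`. -/
def IsPerfectMatchingOn (G : SimpleGraph V2) (Vs : Set V2) (P : Set (Sym2 V2)) : Prop :=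
  P ⊆ G.edgeSet ∧ ∀ v ∈ Vs, ∃! e, e ∈ P ∧ v ∈ e

/-- The contraction `G/P` of a perfect matching `P` in `G`: the simple graph on the
edges of `P` where `e ≠ f` are adjacent iff some endpoint of `e` is adjacent in `G`
to some endpoint of `f` (parallel edges merged, loops discarded). -/
def contractPM (G : SimpleGraph V2) (P : Set (Sym2 V2)) : SimpleGraph ↥P :=
  SimpleGraph.fromRel fun e f =>
    ∃ a b : V2, a ∈ (e : Sym2 V2) ∧ b ∈ (f : Sym2 V2) ∧ G.Adj a b



/-! ### Auxiliary machinery -/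

lemma mkG_adj (E : Set (Sym2 V2)) (Vs : Set V2) (x y : ↥Vs) :
    (mkG E Vs).Adj x y ↔ s((x:V2), (y:V2)) ∈ E ∧ (x:V2) ≠ (y:V2) := by
  simp [mkG, fromEdgeSet_adj, SimpleGraph.induce]

lemma chrom_eq_three {V : Type} (G : SimpleGraph V) (h3 : G.Colorable 3)
    (h2 : ¬ G.Colorable 2) : G.chromaticNumber = 3 := by
  refine le_antisymm ?_ ?_
  · exact_mod_cast h3.chromaticNumber_le
  · have h : ¬ G.chromaticNumber ≤ ((2:ℕ):ℕ∞) := fun hle =>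
      h2 (chromaticNumber_le_iff_colorable.mp hle)
    have h' := (ENat.add_one_le_iff (n := G.chromaticNumber) (m := ((2:ℕ):ℕ∞)) (by simp)).mpr
      (not_le.mp h)
    exact_mod_cast h'

lemma mem_gridE {p q a1 a2 b1 b2 : ℕ} (h1 : a1 < p) (h2 : a2 < q) (h3 : b1 < p) (h4 : b2 < q)
    (h5 : (a1 = b1 ∧ b2 = a2 + 1) ∨ (a2 = b2 ∧ b1 = a1 + 1)) :
    s(((a1,a2):V2),((b1,b2):V2)) ∈ gridE p q :=
  ⟨(a1,a2),(b1,b2), h1, h2, h3, h4, h5, rfl⟩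

lemma gridE_elim {p q : ℕ} {x y : V2} (h : s(x,y) ∈ gridE p q) :
    x.1 < p ∧ x.2 < q ∧ y.1 < p ∧ y.2 < q ∧
      ((x.1 = y.1 ∧ (y.2 = x.2 + 1 ∨ x.2 = y.2 + 1)) ∨
       (x.2 = y.2 ∧ (y.1 = x.1 + 1 ∨ x.1 = y.1 + 1))) := by
  obtain ⟨a, b, h1, h2, h3, h4, h5, he⟩ := h
  rw [Sym2.eq_iff] at he
  rcases he with ⟨rfl, rfl⟩ | ⟨rfl, rfl⟩ <;> tauto

/-- 3-coloring of `H_{k,m,c}`. -/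
def colC (k i j : ℕ) : ℕ := if i % 2 = 0 ∧ (j = 0 ∨ j = k - 1) then 2 else (i + j) % 2

/-- 3-coloring of `H_{k,m,f}`. -/
def colF (k i j : ℕ) : ℕ :=
  if (j = 0 ∧ i % 2 = 1) ∨ (j = k - 1 ∧ i % 2 = 0) then 2 else (i + j) % 2

/-- 3-coloring of `H_{k,m,g}`. -/
def colG (k m i j : ℕ) : ℕ :=
  if (i = 0 ∧ m + 1 ≤ j ∧ j ≤ 3*m+1 ∧ (j + m) % 2 = 1) ∨
     (i = m+1 ∧ 2*k ≤ j + 2*m + 1 ∧ j + 1 ≤ 2*k ∧ j % 2 = 1) then 2 else (i + j) % 2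

lemma colC_lt (k i j : ℕ) : colC k i j < 3 := by unfold colC; split <;> omega
lemma colF_lt (k i j : ℕ) : colF k i j < 3 := by unfold colF; split <;> omega
lemma colG_lt (k m i j : ℕ) : colG k m i j < 3 := by unfold colG; split <;> omega

lemma colC_valid (k m : ℕ) (hk2 : k % 2 = 0) (hk : 6 ≤ k) {x y : V2}
    (h : s(x, y) ∈ HcE k m) : colC k x.1 x.2 ≠ colC k y.1 y.2 := by
  simp only [HcE, Set.mem_union, Set.mem_diff, Set.mem_setOf_eq] at h
  rcases h with ((⟨hg, -⟩ | ⟨i, hi, he⟩) | ⟨i, hi, he⟩)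
  · have h := gridE_elim hg
    simp only [colC]; split_ifs <;> omega
  · simp [Sym2.eq_iff, Prod.ext_iff] at he
    simp only [colC]; split_ifs <;> omega
  · simp [Sym2.eq_iff, Prod.ext_iff] at he
    simp only [colC]; split_ifs <;> omega

lemma colF_valid (k m : ℕ) (hk2 : k % 2 = 1) (hk : 7 ≤ k) {x y : V2}
    (h : s(x, y) ∈ HfE k m) : colF k x.1 x.2 ≠ colF k y.1 y.2 := by
  simp only [HfE, Set.mem_union, Set.mem_diff, Set.mem_setOf_eq,
    Set.mem_singleton_iff] at h
  rcases h with (((⟨hg, -⟩ | ⟨i, hi, he⟩) | he) | ⟨i, hi1, hi2, he⟩)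
  · have h := gridE_elim hg
    simp only [colF]; split_ifs <;> omega
  · simp [Sym2.eq_iff, Prod.ext_iff] at he
    simp only [colF]; split_ifs <;> omega
  · simp [Sym2.eq_iff, Prod.ext_iff] at he
    simp only [colF]; split_ifs <;> omega
  · simp [Sym2.eq_iff, Prod.ext_iff] at he
    simp only [colF]; split_ifs <;> omega

set_option maxHeartbeats 2000000 in
lemma colG_valid (k m : ℕ) (hk : m + 1 ≤ k) (hm : 3 ≤ m) {x y : V2}
    (h : s(x, y) ∈ HgE k m) : colG k m x.1 x.2 ≠ colG k m y.1 y.2 := by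
  simp only [HgE, tc2E, ladE, Set.mem_union, Set.mem_diff, Set.mem_setOf_eq,
    Set.mem_singleton_iff] at h
  rcases h with (((⟨hg, -⟩ | he) | ⟨j, hj, he⟩) | ⟨i, hi, (he | he)⟩)
  · have h := gridE_elim hg
    simp only [colG]; split_ifs <;> omega
  · simp [Sym2.eq_iff, Prod.ext_iff] at he
    simp only [colG]; split_ifs <;> omega
  · simp [Sym2.eq_iff, Prod.ext_iff] at he
    simp only [colG]; split_ifs <;> omega
  · simp [z2, w2, Sym2.eq_iff, Prod.ext_iff] at he
    simp only [colG]; split_ifs <;> omega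
  · simp [x2, v2, Sym2.eq_iff, Prod.ext_iff] at he
    simp only [colG]; split_ifs <;> omega


set_option maxHeartbeats 1000000 in
lemma hc_chrom (k m : ℕ) (hk2 : k % 2 = 0) (hk : 6 ≤ k) : (Hc k m).chromaticNumber = 3 := by
  refine chrom_eq_three _
    ⟨Coloring.mk (fun v => ⟨colC k (v:V2).1 (v:V2).2, colC_lt k _ _⟩) ?_⟩ ?_
  · intro v w hadj hEq
    exact colC_valid k m hk2 hk ((mkG_adj _ _ v w).mp hadj).1 (congrArg Fin.val hEq)
  · rintro ⟨C⟩
    have hv : ∀ j, j < k → ((0:ℕ), j) ∈ HcV k m := by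
      intro j hj; simp only [HcV, gridV, Set.mem_setOf_eq]; omega
    have h0 : (0:ℕ) < k := by omega
    have hk1 : k - 1 < k := by omega
    have hw : ((2*m+1 : ℕ), k-1) ∈ HcV k m := by
      simp only [HcV, gridV, Set.mem_setOf_eq]; omega
    have hadjRow : ∀ n (hn : n < k) (hn1 : n + 1 < k),
        (Hc k m).Adj ⟨(0,n), hv n hn⟩ ⟨(0,n+1), hv (n+1) hn1⟩ := by
      intro n hn hn1
      refine (mkG_adj _ _ _ _).mpr ⟨Set.mem_union_left _ (Set.mem_union_left _
        ⟨mem_gridE (by omega) hn (by omega) hn1 (Or.inl ⟨rfl, rfl⟩), ?_⟩),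
        by intro hcon; rw [Prod.mk.injEq] at hcon; omega⟩
      rintro ⟨i, j, hi, hj, (he | he)⟩ <;> simp [Sym2.eq_iff, Prod.ext_iff] at he <;> omega
    have key : ∀ n (hn : n < k),
        ((C ⟨(0,n), hv n hn⟩).val + n) % 2 = (C ⟨(0,0), hv 0 h0⟩).val % 2 := by
      intro n
      induction n with
      | zero => intro hn; rfl
      | succ n ih =>
        intro hn
        have hn' : n < k := by omega
        have hne := C.valid (hadjRow n hn' hn)
        rw [Ne, Fin.ext_iff] at hne
        have e1 : (C ⟨(0,n), hv n hn'⟩).val < 2 := (C _).isLt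
        have e2 : (C ⟨(0,n+1), hv (n+1) hn⟩).val < 2 := (C _).isLt
        have := ih hn'
        omega
    have eT : (Hc k m).Adj ⟨(0,0), hv 0 h0⟩ ⟨(2*m+1, k-1), hw⟩ := by
      refine (mkG_adj _ _ _ _).mpr ⟨Set.mem_union_right _ ⟨0, by omega, ?_⟩,
        by intro hcon; rw [Prod.mk.injEq] at hcon; omega⟩
      norm_num
    have eW : (Hc k m).Adj ⟨(0,k-1), hv (k-1) hk1⟩ ⟨(2*m+1, k-1), hw⟩ := by
      refine (mkG_adj _ _ _ _).mpr ⟨Set.mem_union_left _ (Set.mem_union_right _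
        ⟨k/2-1, by omega, ?_⟩),
        by intro hcon; rw [Prod.mk.injEq] at hcon; omega⟩
      rw [show 2*(k/2-1)+1 = k-1 by omega]
    have c1 := C.valid eT
    have c2 := C.valid eW
    rw [Ne, Fin.ext_iff] at c1 c2
    have b1 := key (k-1) hk1
    have l1 : (C ⟨(0,0), hv 0 h0⟩).val < 2 := (C _).isLt
    have l2 : (C ⟨(0,k-1), hv (k-1) hk1⟩).val < 2 := (C _).isLt
    have l3 : (C ⟨(2*m+1,k-1), hw⟩).val < 2 := (C _).isLt
    omega

set_option maxHeartbeats 1000000 in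
lemma hf_chrom (k m : ℕ) (hk2 : k % 2 = 1) (hk : 7 ≤ k) : (Hf k m).chromaticNumber = 3 := by
  refine chrom_eq_three _
    ⟨Coloring.mk (fun v => ⟨colF k (v:V2).1 (v:V2).2, colF_lt k _ _⟩) ?_⟩ ?_
  · intro v w hadj hEq
    exact colF_valid k m hk2 hk ((mkG_adj _ _ v w).mp hadj).1 (congrArg Fin.val hEq)
  · rintro ⟨C⟩
    have hv : ∀ j, j < k → ((0:ℕ), j) ∈ HfV k m := by
      intro j hj; simp only [HfV, gridV, Set.mem_setOf_eq]; omega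
    have h0 : (0:ℕ) < k := by omega
    have hk1 : k - 1 < k := by omega
    have hadjRow : ∀ n (hn : n < k) (hn1 : n + 1 < k),
        (Hf k m).Adj ⟨(0,n), hv n hn⟩ ⟨(0,n+1), hv (n+1) hn1⟩ := by
      intro n hn hn1
      refine (mkG_adj _ _ _ _).mpr ⟨Set.mem_union_left _ (Set.mem_union_left _
        (Set.mem_union_left _
        ⟨mem_gridE (by omega) hn (by omega) hn1 (Or.inl ⟨rfl, rfl⟩), ?_⟩)),
        by intro hcon; rw [Prod.mk.injEq] at hcon; omega⟩
      rintro ⟨i, j, hi, hj, (he | he)⟩ <;> simp [Sym2.eq_iff, Prod.ext_iff] at he <;> omega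
    have key : ∀ n (hn : n < k),
        ((C ⟨(0,n), hv n hn⟩).val + n) % 2 = (C ⟨(0,0), hv 0 h0⟩).val % 2 := by
      intro n
      induction n with
      | zero => intro hn; rfl
      | succ n ih =>
        intro hn
        have hn' : n < k := by omega
        have hne := C.valid (hadjRow n hn' hn)
        rw [Ne, Fin.ext_iff] at hne
        have e1 : (C ⟨(0,n), hv n hn'⟩).val < 2 := (C _).isLt
        have e2 : (C ⟨(0,n+1), hv (n+1) hn⟩).val < 2 := (C _).isLt
        have := ih hn'
        omega
    have eS : (Hf k m).Adj ⟨(0,0), hv 0 h0⟩ ⟨(0, k-1), hv (k-1) hk1⟩ := by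
      refine (mkG_adj _ _ _ _).mpr ⟨Set.mem_union_left _ (Set.mem_union_right _ rfl),
        by intro hcon; rw [Prod.mk.injEq] at hcon; omega⟩
    have c1 := C.valid eS
    rw [Ne, Fin.ext_iff] at c1
    have b1 := key (k-1) hk1
    have l1 : (C ⟨(0,0), hv 0 h0⟩).val < 2 := (C _).isLt
    have l2 : (C ⟨(0,k-1), hv (k-1) hk1⟩).val < 2 := (C _).isLt
    omega

set_option maxHeartbeats 1000000 in
lemma hg_chrom (k m : ℕ) (hk : m + 1 ≤ k) (hm : 3 ≤ m) : (Hg k m).chromaticNumber = 3 := by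
  refine chrom_eq_three _
    ⟨Coloring.mk (fun v => ⟨colG k m (v:V2).1 (v:V2).2, colG_lt k m _ _⟩) ?_⟩ ?_
  · intro v w hadj hEq
    exact colG_valid k m hk hm ((mkG_adj _ _ v w).mp hadj).1 (congrArg Fin.val hEq)
  · rintro ⟨C⟩
    have hv : ∀ t, t ≤ 2*k - 1 → ((0:ℕ), m+1+t) ∈ tc2V k m := by
      intro t ht; simp only [tc2V, ladV, Set.mem_diff, Set.mem_setOf_eq]; omega
    have hw1 : ((1:ℕ), 2*k+m) ∈ tc2V k m := by
      simp only [tc2V, ladV, Set.mem_diff, Set.mem_setOf_eq]; omega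
    have h0 : (0:ℕ) ≤ 2*k-1 := by omega
    have htop : 2*k-1 ≤ 2*k-1 := le_rfl
    have hadjRow : ∀ t (ht : t ≤ 2*k-1) (ht1 : t+1 ≤ 2*k-1),
        (Hg k m).Adj ⟨(0,m+1+t), hv t ht⟩ ⟨(0,m+1+(t+1)), hv (t+1) ht1⟩ := by
      intro t ht ht1
      refine (mkG_adj _ _ _ _).mpr ⟨Set.mem_union_left _ (Set.mem_union_left _
        (Set.mem_union_left _
        ⟨mem_gridE (by omega) (by omega) (by omega) (by omega) (Or.inl ⟨rfl, by omega⟩), ?_⟩)),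
        by intro hcon; rw [Prod.mk.injEq] at hcon; omega⟩
      rintro ⟨i, j, hi, hj, he⟩
      simp [Sym2.eq_iff, Prod.ext_iff] at he <;> omega
    have edgeV : (Hg k m).Adj ⟨(0, m+1+(2*k-1)), hv (2*k-1) htop⟩ ⟨(1, 2*k+m), hw1⟩ := by
      refine (mkG_adj _ _ _ _).mpr ⟨Set.mem_union_left _ (Set.mem_union_left _
        (Set.mem_union_left _
        ⟨mem_gridE (by omega) (by omega) (by omega) (by omega) (Or.inr ⟨by omega, by omega⟩),
          ?_⟩)),
        by intro hcon; rw [Prod.mk.injEq] at hcon; omega⟩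
      rintro ⟨i, j, hi, hj, he⟩
      simp [Sym2.eq_iff, Prod.ext_iff] at he <;> omega
    have edgeZW : (Hg k m).Adj ⟨(0, m+1+0), hv 0 h0⟩ ⟨(1, 2*k+m), hw1⟩ := by
      refine (mkG_adj _ _ _ _).mpr ⟨Set.mem_union_right _ ⟨0, by omega, Or.inl ?_⟩,
        by intro hcon; rw [Prod.mk.injEq] at hcon; omega⟩
      norm_num [z2, w2]
    have key : ∀ t (ht : t ≤ 2*k-1),
        ((C ⟨(0,m+1+t), hv t ht⟩).val + t) % 2 = (C ⟨(0,m+1+0), hv 0 h0⟩).val % 2 := by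
      intro t
      induction t with
      | zero => intro ht; rfl
      | succ n ih =>
        intro ht
        have hn' : n ≤ 2*k-1 := by omega
        have hne := C.valid (hadjRow n hn' ht)
        rw [Ne, Fin.ext_iff] at hne
        have e1 : (C ⟨(0,m+1+n), hv n hn'⟩).val < 2 := (C _).isLt
        have e2 : (C ⟨(0,m+1+(n+1)), hv (n+1) ht⟩).val < 2 := (C _).isLt
        have := ih hn'
        omega
    have c1 := C.valid edgeZW
    have c2 := C.valid edgeV
    rw [Ne, Fin.ext_iff] at c1 c2
    have b1 := key (2*k-1) htop
    have l1 : (C ⟨(0,m+1+0), hv 0 h0⟩).val < 2 := (C _).isLt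
    have l2 : (C ⟨(0,m+1+(2*k-1)), hv (2*k-1) htop⟩).val < 2 := (C _).isLt
    have l3 : (C ⟨(1,2*k+m), hw1⟩).val < 2 := (C _).isLt
    omega

/-- `H_{k,m,c}`, `H_{k,m,f}` and `H_{k,m,g}` have chromatic number 3. -/
theorem chromatic_number_three :
    (∀ k m : ℕ, Even k → 6 ≤ k → 1 ≤ m → (Hc k m).chromaticNumber = 3) ∧
    (∀ k m : ℕ, Odd k → 7 ≤ k → (Hf k m).chromaticNumber = 3) ∧
    (∀ k m : ℕ, m + 1 ≤ k → 3 ≤ m → (Hg k m).chromaticNumber = 3) := by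
  exact ⟨fun k m hk hk6 _ => hc_chrom k m (Nat.even_iff.mp hk) hk6,
    fun k m hk hk7 => hf_chrom k m (Nat.odd_iff.mp hk) hk7,
    fun k m hk hm => hg_chrom k m hk hm⟩
end HexPaper
end

section
/- Let 0≤r≤⌊k/2⌋, m≥2, k≥3 (or m=1, k>3, 2≤r≤⌊k/2⌋). The set P = {{(i,2j),(i,2j+1)} : 0≤i≤m, 0≤j≤k−1} is a perfect matching of H_{k,m,r}, and the contraction H_{k,m,r}/P is isomorphic to the torus locally grid graph T^r_{k,m+1}. -/
open SimpleGraph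

namespace HexPaper

/-- The perfect matching `P = {{(i,2j),(i,2j+1)} : 0 ≤ i ≤ m, 0 ≤ j ≤ k-1}` of a
hexagonal cylinder of length `k` and breadth `m`. -/
def Pcyl (k m : ℕ) : Set (Sym2 V2) :=
  {e | ∃ i j, i ≤ m ∧ j < k ∧ e = s(((i, 2 * j) : V2), (i, 2 * j + 1))}

section Helpers

variable {k m r : ℕ}

lemma xC_eq (m j : ℕ) : xC m j = (m, 2*j + (1 - m % 2)) := by
  unfold xC
  rcases Nat.mod_two_eq_zero_or_one m with h | h <;> simp [h]

lemma pcyl_eq_iff {i j i' j' : ℕ} :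
    (s(((i, 2*j) : V2), (i, 2*j+1)) = s(((i', 2*j') : V2), (i', 2*j'+1))) ↔ (i = i' ∧ j = j') := by
  rw [Sym2.eq_iff]; simp only [Prod.mk.injEq, true_and, and_true]; all_goals omega

lemma mem_cylV {v : V2} : v ∈ cylV k m ↔ v.1 < m+1 ∧ v.2 < 2*k := Iff.rfl

lemma mem_gridE_iff {p q x1 y1 x2 y2 : ℕ} :
    s(((x1, y1) : V2), (x2, y2)) ∈ gridE p q ↔
      x1 < p ∧ x2 < p ∧ y1 < q ∧ y2 < q ∧
        ((x1 = x2 ∧ (y2 = y1+1 ∨ y1 = y2+1)) ∨ (y1 = y2 ∧ (x2 = x1+1 ∨ x1 = x2+1))) := by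
  constructor
  · rintro ⟨⟨a1, a2⟩, ⟨b1, b2⟩, h1, h2, h3, h4, h5, h6⟩
    rw [Sym2.eq_iff] at h6
    simp only [Prod.mk.injEq] at h5 h6
    omega
  · rintro ⟨h1, h2, h3, h4, (⟨h5, h6 | h6⟩ | ⟨h5, h6 | h6⟩)⟩
    · exact ⟨(x1,y1), (x2,y2), h1, h3, h2, h4, Or.inl ⟨h5, h6⟩, rfl⟩
    · exact ⟨(x2,y2), (x1,y1), h2, h4, h1, h3, Or.inl ⟨h5.symm, h6⟩, Sym2.eq_swap.symm⟩
    · exact ⟨(x1,y1), (x2,y2), h1, h3, h2, h4, Or.inr ⟨h5, h6⟩, rfl⟩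
    · exact ⟨(x2,y2), (x1,y1), h2, h4, h1, h3, Or.inr ⟨h5.symm, h6⟩, Sym2.eq_swap.symm⟩

lemma ambient_adj {E : Set (Sym2 V2)} {Vs : Set V2} {a b : V2} :
    (ambientG E Vs).Adj a b ↔ (s(a,b) ∈ E ∧ a ∈ Vs ∧ b ∈ Vs) ∧ a ≠ b := by
  rw [ambientG, fromEdgeSet_adj]
  constructor
  · rintro ⟨⟨hE, hV⟩, hne⟩
    exact ⟨⟨hE, hV a (by simp), hV b (by simp)⟩, hne⟩
  · rintro ⟨⟨hE, ha, hb⟩, hne⟩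
    refine ⟨⟨hE, fun v hv => ?_⟩, hne⟩
    rcases Sym2.mem_iff.1 hv with rfl | rfl <;> assumption

lemma contract_adj {G : SimpleGraph V2} {P : Set (Sym2 V2)} (e f : ↥P) :
    (contractPM G P).Adj e f ↔ e.1 ≠ f.1 ∧ ∃ a b : V2, a ∈ e.1 ∧ b ∈ f.1 ∧ G.Adj a b := by
  rw [contractPM, fromRel_adj]
  constructor
  · rintro ⟨hne, ⟨a, b, ha, hb, hadj⟩ | ⟨a, b, ha, hb, hadj⟩⟩
    · exact ⟨fun h' => hne (Subtype.ext h'), a, b, ha, hb, hadj⟩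
    · exact ⟨fun h' => hne (Subtype.ext h'), b, a, hb, ha, hadj.symm⟩
  · rintro ⟨hne, a, b, ha, hb, hadj⟩
    exact ⟨fun h => hne (congrArg Subtype.val h), Or.inl ⟨a, b, ha, hb, hadj⟩⟩

lemma mem_HrE_grid {a b : V2} (h : s(a,b) ∈ gridE (m+1) (2*k))
    (hrm : ∀ i j : ℕ, s(a,b) ≠ s(((2*i, 2*j) : V2), (2*i+1, 2*j)) ∧
      s(a,b) ≠ s(((2*i+1, 2*j+1) : V2), (2*i+2, 2*j+1))) :
    s(a,b) ∈ HrE k m r := by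
  refine Or.inl ⟨Or.inl h, ?_⟩
  rintro ⟨i, j, _, _, hc | hc⟩
  · exact (hrm i j).1 hc
  · exact (hrm i j).2 hc

lemma mem_HrE_wrap {a b : V2} (h : ∃ t, t < m+1 ∧ s(a,b) = s(((t, 0) : V2), (t, 2*k - 1)))
    (hrm : ∀ i j : ℕ, s(a,b) ≠ s(((2*i, 2*j) : V2), (2*i+1, 2*j)) ∧
      s(a,b) ≠ s(((2*i+1, 2*j+1) : V2), (2*i+2, 2*j+1))) :
    s(a,b) ∈ HrE k m r := by
  refine Or.inl ⟨Or.inr h, ?_⟩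
  rintro ⟨i, j, _, _, hc | hc⟩
  · exact (hrm i j).1 hc
  · exact (hrm i j).2 hc

-- backward adjacency constructors
lemma adjA_match (hi : i ≤ m) (hj : j < k) :
    (ambientG (HrE k m r) (cylV k m)).Adj (i, 2*j) (i, 2*j+1) := by
  rw [ambient_adj]
  refine ⟨⟨mem_HrE_grid (mem_gridE_iff.2 (by omega)) ?_, by constructor <;> simp <;> omega,
    by constructor <;> simp <;> omega⟩, by simp⟩
  intro i' j'
  constructor <;> · simp only [ne_eq, Sym2.eq_iff, Prod.mk.injEq]; omega

lemma adjA_horiz (hi : i ≤ m) (hj : j + 1 < k) :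
    (ambientG (HrE k m r) (cylV k m)).Adj (i, 2*j+1) (i, 2*j+2) := by
  rw [ambient_adj]
  refine ⟨⟨mem_HrE_grid (mem_gridE_iff.2 (by omega)) ?_, by constructor <;> simp <;> omega,
    by constructor <;> simp <;> omega⟩, by simp⟩
  intro i' j'
  constructor <;> · simp only [ne_eq, Sym2.eq_iff, Prod.mk.injEq]; omega

lemma adjA_vert (ht : t < m) (hc : c < 2*k) (hp : (t + c) % 2 = 1) :
    (ambientG (HrE k m r) (cylV k m)).Adj (t, c) (t+1, c) := by
  rw [ambient_adj]
  refine ⟨⟨mem_HrE_grid (mem_gridE_iff.2 (by omega)) ?_, by constructor <;> simp <;> omega,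
    by constructor <;> simp <;> omega⟩, by simp⟩
  intro i' j'
  constructor <;> · simp only [ne_eq, Sym2.eq_iff, Prod.mk.injEq]; omega

lemma adjA_wrap (hk : 1 ≤ k) (hi : i ≤ m) :
    (ambientG (HrE k m r) (cylV k m)).Adj (i, 0) (i, 2*k-1) := by
  rw [ambient_adj]
  refine ⟨⟨mem_HrE_wrap ⟨i, by omega, rfl⟩ ?_, by constructor <;> simp <;> omega,
    by constructor <;> simp <;> omega⟩, by simp; omega⟩
  intro i' j'
  constructor <;> · simp only [ne_eq, Sym2.eq_iff, Prod.mk.injEq]; omega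

lemma adjA_hook (hk : 1 ≤ k) (hm : 1 ≤ m) (hj : j < k) :
    (ambientG (HrE k m r) (cylV k m)).Adj (0, 2*j) (m, 2*((j+r) % k) + (1 - m % 2)) := by
  have hmod : (j + r) % k < k := Nat.mod_lt _ (by omega)
  rw [ambient_adj]
  refine ⟨⟨Or.inr ⟨j, hj, by rw [zC, xC_eq]⟩, by constructor <;> simp <;> omega,
    by constructor <;> simp <;> omega⟩, by simp [Prod.ext_iff]; omega⟩

lemma adjA_cases {a1 a2 b1 b2 : ℕ}
    (h : (ambientG (HrE k m r) (cylV k m)).Adj (a1, a2) (b1, b2)) :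
    a1 ≤ m ∧ b1 ≤ m ∧ a2 < 2*k ∧ b2 < 2*k ∧ ¬(a1 = b1 ∧ a2 = b2) ∧
    ((a1 = b1 ∧ (b2 = a2+1 ∨ a2 = b2+1)) ∨
     (a2 = b2 ∧ (b1 = a1+1 ∨ a1 = b1+1)) ∨
     (a1 = b1 ∧ ((a2 = 0 ∧ b2 = 2*k-1) ∨ (b2 = 0 ∧ a2 = 2*k-1))) ∨
     (∃ t, t < k ∧ ((a1 = 0 ∧ a2 = 2*t ∧ b1 = m ∧ b2 = 2*((t+r) % k) + (1 - m % 2)) ∨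
                    (b1 = 0 ∧ b2 = 2*t ∧ a1 = m ∧ a2 = 2*((t+r) % k) + (1 - m % 2))))) := by
  rw [ambient_adj] at h
  obtain ⟨⟨hE, ha, hb⟩, hne⟩ := h
  rw [mem_cylV] at ha hb
  simp only at ha hb
  have hne' : ¬(a1 = b1 ∧ a2 = b2) := by
    rintro ⟨rfl, rfl⟩; exact hne rfl
  refine ⟨by omega, by omega, ha.2, hb.2, hne', ?_⟩
  rcases hE with ⟨hcyl, -⟩ | ⟨t, ht, heq⟩
  · rcases hcyl with hg | ⟨t, ht, heq⟩
    · rw [mem_gridE_iff] at hg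
      omega
    · rw [Sym2.eq_iff] at heq
      simp only [Prod.mk.injEq] at heq
      refine Or.inr (Or.inr (Or.inl ?_))
      omega
  · rw [zC, xC_eq, Sym2.eq_iff] at heq
    simp only [Prod.mk.injEq] at heq
    refine Or.inr (Or.inr (Or.inr ⟨t, ht, ?_⟩))
    omega

end Helpers

def decP : Sym2 V2 → V2 :=
  Sym2.lift ⟨fun a b => (min a.2 b.2 / 2, min a.1 b.1), fun a b => by
    dsimp only; rw [min_comm a.2, min_comm a.1]⟩

lemma decP_mk (i j : ℕ) : decP s(((i, 2*j) : V2), (i, 2*j+1)) = (j, i) := by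
  simp only [decP, Sym2.lift_mk]
  simp only [Prod.mk.injEq]
  constructor <;> omega

def cEquiv (k m : ℕ) : ↥(Pcyl k m) ≃ ↥(gridV k (m+1)) where
  toFun e := ⟨decP e.1, by
    obtain ⟨i, j, hi, hj, he⟩ := e.2
    rw [he, decP_mk]; exact ⟨hj, by omega⟩⟩
  invFun v := ⟨s(((v.1.2, 2*v.1.1) : V2), (v.1.2, 2*v.1.1+1)),
    ⟨v.1.2, v.1.1, by have := v.2.2; omega, v.2.1, rfl⟩⟩
  left_inv e := Subtype.ext (by
    obtain ⟨i, j, hi, hj, he⟩ := e.2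
    simp only [he, decP_mk])
  right_inv v := Subtype.ext (by simp only [decP_mk])

lemma tt_adj {p q δ : ℕ} (u v : ↥(gridV p q)) :
    (Tt p q δ).Adj u v ↔ s(u.1, v.1) ∈ TtE p q δ ∧ u.1 ≠ v.1 := by
  rw [Tt, mkG]
  exact Iff.rfl

lemma main_iff {k m r i j i' j' : ℕ} (hk : 3 ≤ k) (hm : 1 ≤ m)
    (hi : i ≤ m) (hj : j < k) (hi' : i' ≤ m) (hj' : j' < k) :
    (s(((j, i) : V2), (j', i')) ∈ TtE k (m+1) r ∧ ((j, i) : V2) ≠ (j', i')) ↔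
    (s(((i, 2*j) : V2), (i, 2*j+1)) ≠ s(((i', 2*j') : V2), (i', 2*j'+1)) ∧
     ∃ a b : V2, a ∈ s(((i, 2*j) : V2), (i, 2*j+1)) ∧ b ∈ s(((i', 2*j') : V2), (i', 2*j'+1)) ∧
       (ambientG (HrE k m r) (cylV k m)).Adj a b) := by
  have hk1 : 1 ≤ k := by omega
  constructor
  · rintro ⟨hmem, hne⟩
    have hne2 : ¬(j = j' ∧ i = i') := by
      intro hc; exact hne (by simp [Prod.ext_iff, hc.1, hc.2])
    refine ⟨fun hEq => absurd (pcyl_eq_iff.1 hEq) (by omega), ?_⟩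
    rcases hmem with (hg | ⟨t, ht, heq⟩) | ⟨t, ht, heq⟩
    · rw [mem_gridE_iff] at hg
      obtain ⟨-, -, -, -, hcases⟩ := hg
      rcases hcases with ⟨hjj, hii | hii⟩ | ⟨hii, hjj | hjj⟩
      · -- i' = i + 1, j = j'
        subst hjj; subst hii
        by_cases hp : (i + 2*j) % 2 = 1
        · exact ⟨(i, 2*j), (i+1, 2*j), by simp, by simp, adjA_vert (t := i) (c := 2*j) (by omega) (by omega) hp⟩
        · exact ⟨(i, 2*j+1), (i+1, 2*j+1), by simp, by simp,
            adjA_vert (t := i) (c := 2*j+1) (by omega) (by omega) (by omega)⟩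
      · -- i = i' + 1, j = j'
        subst hjj; subst hii
        by_cases hp : (i' + 2*j) % 2 = 1
        · exact ⟨(i'+1, 2*j), (i', 2*j), by simp, by simp,
            (adjA_vert (t := i') (c := 2*j) (by omega) (by omega) hp).symm⟩
        · exact ⟨(i'+1, 2*j+1), (i', 2*j+1), by simp, by simp,
            (adjA_vert (t := i') (c := 2*j+1) (by omega) (by omega) (by omega)).symm⟩
      · -- i = i', j' = j + 1
        refine ⟨(i, 2*j+1), (i, 2*j+2), by simp, ?_,
          adjA_horiz (i := i) (j := j) (by omega) (by omega)⟩
        rw [Sym2.mem_iff]; simp only [Prod.mk.injEq, true_and, and_true]; all_goals omega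
      · -- i = i', j = j' + 1
        refine ⟨(i, 2*j'+2), (i, 2*j'+1), ?_, ?_,
          (adjA_horiz (i := i) (j := j') (by omega) (by omega)).symm⟩
        · rw [Sym2.mem_iff]; simp only [Prod.mk.injEq, true_and, and_true]; all_goals omega
        · rw [Sym2.mem_iff]; simp only [Prod.mk.injEq, true_and, and_true]; all_goals omega
    · -- hook edge of TtE
      rw [Sym2.eq_iff] at heq
      simp only [Prod.mk.injEq] at heq
      have hadj := adjA_hook (k := k) (m := m) (r := r) hk1 hm (j := j) hj
      have hadj' := adjA_hook (k := k) (m := m) (r := r) hk1 hm (j := j') hj'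
      rcases heq with ⟨⟨h1, h2⟩, h3, h4⟩ | ⟨⟨h1, h2⟩, h3, h4⟩
      · -- j = t, i = 0, j' = (t+r)%k, i' = m + 1 - 1
        subst h1
        refine ⟨(i, 2*j), (m, 2*((j+r) % k) + (1 - m % 2)), by simp, ?_, ?_⟩
        · rw [Sym2.mem_iff]; simp only [Prod.mk.injEq, true_and, and_true]; all_goals omega
        · rw [show i = 0 from h2]; exact hadj
      · -- j' = t, i' = 0, j = (t+r)%k, i = m + 1 - 1
        subst h3
        refine ⟨(m, 2*((j'+r) % k) + (1 - m % 2)), (i', 2*j'), ?_, by simp, ?_⟩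
        · rw [Sym2.mem_iff]; simp only [Prod.mk.injEq, true_and, and_true]; all_goals omega
        · rw [show i' = 0 from h4]; exact hadj'.symm
    · -- wrap edge of TtE
      rw [Sym2.eq_iff] at heq
      simp only [Prod.mk.injEq] at heq
      rcases heq with ⟨⟨h1, h2⟩, h3, h4⟩ | ⟨⟨h1, h2⟩, h3, h4⟩
      · -- j = 0, i = t, j' = k-1, i' = t
        refine ⟨(i, 0), (i, 2*k-1), ?_, ?_, adjA_wrap hk1 hi⟩
        · rw [Sym2.mem_iff]; simp only [Prod.mk.injEq, true_and, and_true]; all_goals omega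
        · rw [Sym2.mem_iff]; simp only [Prod.mk.injEq, true_and, and_true]; all_goals omega
      · -- j = k-1, i = t, j' = 0, i' = t
        refine ⟨(i, 2*k-1), (i, 0), ?_, ?_, (adjA_wrap hk1 hi).symm⟩
        · rw [Sym2.mem_iff]; simp only [Prod.mk.injEq, true_and, and_true]; all_goals omega
        · rw [Sym2.mem_iff]; simp only [Prod.mk.injEq, true_and, and_true]; all_goals omega
  · rintro ⟨hnee, ⟨a1, a2⟩, ⟨b1, b2⟩, ha, hb, hadj⟩
    rw [Sym2.mem_iff] at ha hb
    simp only [Prod.mk.injEq] at ha hb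
    have hne2 : ¬(i = i' ∧ j = j') := fun hc => hnee (pcyl_eq_iff.2 hc)
    have hD := adjA_cases hadj
    obtain ⟨-, -, -, -, hne3, hD⟩ := hD
    constructor
    · rcases hD with hD | hD | hD | ⟨t, ht, hD⟩
      · -- vertical step in columns: a1 = b1
        exact Or.inl (Or.inl (mem_gridE_iff.2 (by omega)))
      · -- a2 = b2 : row step
        exact Or.inl (Or.inl (mem_gridE_iff.2 (by omega)))
      · -- wrap
        refine Or.inr ⟨i, by omega, ?_⟩
        rw [Sym2.eq_iff]; simp only [Prod.mk.injEq, true_and, and_true]; all_goals omega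
      · -- hook
        rcases hD with ⟨h1, h2, h3, h4⟩ | ⟨h1, h2, h3, h4⟩
        · refine Or.inl (Or.inr ⟨j, hj, ?_⟩)
          have hjt : j = t := by omega
          have hX : (j + r) % k = (t + r) % k := by rw [hjt]
          rw [Sym2.eq_iff]; simp only [Prod.mk.injEq, true_and, and_true]; all_goals omega
        · refine Or.inl (Or.inr ⟨j', hj', ?_⟩)
          have hjt : j' = t := by omega
          have hX : (j' + r) % k = (t + r) % k := by rw [hjt]
          rw [Sym2.eq_iff]; simp only [Prod.mk.injEq, true_and, and_true]; all_goals omega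
    · simp only [ne_eq, Prod.mk.injEq, not_and]
      intro hjj hii
      rcases hD with hD | hD | hD | ⟨t, ht, hD⟩ <;> omega

/-- `P` is a perfect matching of `H_{k,m,r}` and `H_{k,m,r}/P ≅ T^r_{k,m+1}`. -/
theorem Hr_contract (k m r : ℕ) (hr : r ≤ k / 2)
    (h : (2 ≤ m ∧ 3 ≤ k) ∨ (m = 1 ∧ 3 < k ∧ 2 ≤ r)) :
    IsPerfectMatchingOn (ambientG (HrE k m r) (cylV k m)) (cylV k m) (Pcyl k m) ∧
    Nonempty (contractPM (ambientG (HrE k m r) (cylV k m)) (Pcyl k m) ≃g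
      Tt k (m + 1) r) := by
  have hk : 3 ≤ k := by rcases h with ⟨_, h2⟩ | ⟨_, h2, _⟩ <;> omega
  have hm : 1 ≤ m := by rcases h with ⟨h1, _⟩ | ⟨h1, _, _⟩ <;> omega
  constructor
  · constructor
    · rintro e ⟨i, j, hi, hj, rfl⟩
      rw [SimpleGraph.mem_edgeSet]
      exact adjA_match hi hj
    · rintro ⟨v1, v2⟩ hv
      rw [mem_cylV] at hv
      obtain ⟨hv1, hv2⟩ := hv
      refine ⟨s(((v1, 2*(v2/2)) : V2), (v1, 2*(v2/2)+1)),
        ⟨⟨v1, v2/2, by omega, by omega, rfl⟩, ?_⟩, ?_⟩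
      · rw [Sym2.mem_iff]; simp only [Prod.mk.injEq, true_and, and_true]; all_goals omega
      · rintro e ⟨⟨i, j, hi, hj, rfl⟩, hve⟩
        rw [Sym2.mem_iff] at hve
        simp only [Prod.mk.injEq] at hve
        have h1 : i = v1 := by omega
        have h2 : j = v2/2 := by omega
        rw [h1, h2]
  · refine ⟨⟨cEquiv k m, ?_⟩⟩
    intro e f
    obtain ⟨i, j, hi, hj, hval⟩ := e.2
    obtain ⟨i', j', hi', hj', hval'⟩ := f.2
    have hphe : ((cEquiv k m) e).1 = (j, i) := by
      show decP e.1 = _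
      rw [hval, decP_mk]
    have hphf : ((cEquiv k m) f).1 = (j', i') := by
      show decP f.1 = _
      rw [hval', decP_mk]
    rw [tt_adj, contract_adj, hphe, hphf, hval, hval']
    exact main_iff hk hm hi hj hi' hj'
end HexPaper
end
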